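/- Let λ ∈ ℝ and let (q,u,p), with q ∈ C¹([t₁−τ,t₂], ℝⁿ), u ∈ C¹([t₁−τ,t₂], ℝᵐ), p ∈ C¹([t₁,t₂], ℝⁿ), be an isoperimetric Pontryagin extremal with time delay, i.e. with H[q,u,p,λ]_τ(t) := L[q,u]_τ(t) − λ·g[q,u]_τ(t) + p(t)·φ[q,u]_τ(t) it satisfies: q̇(t) = ∂₆H[q,u,p,λ]_τ(t) on [t₁,t₂]; ṗ(t) = −∂₂H[q,u,p,λ]_τ(t) − ∂₄H[q,u,p,λ]_τ(t+τ) and ∂₃H[q,u,p,λ]_τ(t) + ∂₅H[q,u,p,λ]_τ(t+τ) = 0 on [t₁,t₂−τ]; and ṗ(t) = −∂₂H[q,u,p,λ]_τ(t) and ∂₃H[q,u,p,λ]_τ(t) = 0 on [t₂−τ,t₂]. Suppose moreover that ∂₄H[q,u,p,λ]_τ(t+τ)·q̇(t) + ∂₅H[q,u,p,λ]_τ(t+τ)·u̇(t) = 0 for all t ∈ [t₁−τ, t₂−τ]. Then d/dt H[q,u,p,λ]_τ(t) = ∂₁H[q,u,p,λ]_τ(t) for all t ∈ [t₁, t₂].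 -/

import Mathlib

/-!
By the chain rule, `d/dt H[q,u,p,λ]_τ(t)` is `∂₁H` plus the pairings of `∂₂H, …, ∂₆H` with
`q̇(t), u̇(t), q̇(t-τ), u̇(t-τ), ṗ(t)`. The two delayed pairings cancel by the extra condition
taken at `t - τ`. Substituting `q̇ = ∂₆H` and the costate and stationarity equations, `∂₂H·q̇`
cancels against `q̇·ṗ`; what is left is minus the extra condition at `t` on `[t₁, t₂ - τ]`,
and nothing on `[t₂ - τ, t₂]`.
-/

open Set MeasureTheory RealInnerProductSpace

noncomputable section

abbrev Vec (n : ℕ) := EuclideanSpace ℝ (Fin n)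

/-- The type of integrands/dynamics `f(t, q, u, q_τ, u_τ)` with values in `α`. -/
abbrev CF (n m : ℕ) (α : Type) := ℝ → Vec n → Vec m → Vec n → Vec m → α

/-- The type of Hamiltonians `H(t, q, u, q_τ, u_τ, p)`. -/
abbrev HamT (n m : ℕ) := ℝ → Vec n → Vec m → Vec n → Vec m → Vec n → ℝ

def Ham {n m : ℕ} (L g : CF n m ℝ) (φ : CF n m (Vec n)) (lam : ℝ) : HamT n m :=
  fun t a b c d p => L t a b c d - lam * g t a b c d + ⟪p, φ t a b c d⟫

/-- `∂₁H[q,u,p,λ]_τ(t)` (derivative w.r.t. the time slot), evaluated along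
`(t, q(t), u(t), q(t-τ), u(t-τ), p(t))`. -/
def dH1 {n m : ℕ} (H : HamT n m) (τ : ℝ) (q : ℝ → Vec n) (u : ℝ → Vec m)
    (p : ℝ → Vec n) (t : ℝ) : ℝ :=
  deriv (fun s => H s (q t) (u t) (q (t - τ)) (u (t - τ)) (p t)) t

/-- `∂₂H[q,u,p,λ]_τ(t)` (gradient w.r.t. the state slot). -/
def dH2 {n m : ℕ} (H : HamT n m) (τ : ℝ) (q : ℝ → Vec n) (u : ℝ → Vec m)
    (p : ℝ → Vec n) (t : ℝ) : Vec n :=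
  gradient (fun y => H t y (u t) (q (t - τ)) (u (t - τ)) (p t)) (q t)

/-- `∂₃H[q,u,p,λ]_τ(t)` (gradient w.r.t. the control slot). -/
def dH3 {n m : ℕ} (H : HamT n m) (τ : ℝ) (q : ℝ → Vec n) (u : ℝ → Vec m)
    (p : ℝ → Vec n) (t : ℝ) : Vec m :=
  gradient (fun v => H t (q t) v (q (t - τ)) (u (t - τ)) (p t)) (u t)

/-- `∂₄H[q,u,p,λ]_τ(t)` (gradient w.r.t. the delayed state slot). -/
def dH4 {n m : ℕ} (H : HamT n m) (τ : ℝ) (q : ℝ → Vec n) (u : ℝ → Vec m)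
    (p : ℝ → Vec n) (t : ℝ) : Vec n :=
  gradient (fun y => H t (q t) (u t) y (u (t - τ)) (p t)) (q (t - τ))

/-- `∂₅H[q,u,p,λ]_τ(t)` (gradient w.r.t. the delayed control slot). -/
def dH5 {n m : ℕ} (H : HamT n m) (τ : ℝ) (q : ℝ → Vec n) (u : ℝ → Vec m)
    (p : ℝ → Vec n) (t : ℝ) : Vec m :=
  gradient (fun v => H t (q t) (u t) (q (t - τ)) v (p t)) (u (t - τ))

/-- `∂₆H[q,u,p,λ]_τ(t)` (gradient w.r.t. the costate slot). -/
def dH6 {n m : ℕ} (H : HamT n m) (τ : ℝ) (q : ℝ → Vec n) (u : ℝ → Vec m)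
    (p : ℝ → Vec n) (t : ℝ) : Vec n :=
  gradient (fun pp => H t (q t) (u t) (q (t - τ)) (u (t - τ)) pp) (p t)

/-- `H[q,u,p,λ]_τ(t)`: the Hamiltonian evaluated along the delayed process. -/
def hamAlong {n m : ℕ} (H : HamT n m) (τ : ℝ) (q : ℝ → Vec n) (u : ℝ → Vec m)
    (p : ℝ → Vec n) (t : ℝ) : ℝ :=
  H t (q t) (u t) (q (t - τ)) (u (t - τ)) (p t)

def CF_C1 {n m : ℕ} {α : Type} [NormedAddCommGroup α] [NormedSpace ℝ α]
    (f : CF n m α) : Prop :=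
  ContDiff ℝ 1 (fun p : ℝ × Vec n × Vec m × Vec n × Vec m =>
    f p.1 p.2.1 p.2.2.1 p.2.2.2.1 p.2.2.2.2)

section PartialDerivatives

variable {𝕜 E F G : Type*} [NontriviallyNormedField 𝕜]
  [NormedAddCommGroup E] [NormedSpace 𝕜 E] [NormedAddCommGroup F] [NormedSpace 𝕜 F]
  [NormedAddCommGroup G] [NormedSpace 𝕜 G] {f : E × F → G} {f' : E × F →L[𝕜] G} {x : E} {y : F}

theorem HasFDerivAt.partial_left (hf : HasFDerivAt f f' (x, y)) :
    HasFDerivAt (fun a => f (a, y)) (f'.comp (.inl 𝕜 E F)) x :=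
  hf.comp x (hasFDerivAt_prodMk_left x y)

theorem HasFDerivAt.partial_right (hf : HasFDerivAt f f' (x, y)) :
    HasFDerivAt (fun b => f (x, b)) (f'.comp (.inr 𝕜 E F)) y :=
  hf.comp y (hasFDerivAt_prodMk_right x y)

end PartialDerivatives

section DelayedHamiltonian

variable {n m : ℕ}

def uncurryHam (H : HamT n m) (z : ℝ × Vec n × Vec m × Vec n × Vec m × Vec n) : ℝ :=
  H z.1 z.2.1 z.2.2.1 z.2.2.2.1 z.2.2.2.2.1 z.2.2.2.2.2

theorem contDiff_uncurryHam_Ham {L g : CF n m ℝ} {φ : CF n m (Vec n)}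
    (hL : CF_C1 L) (hg : CF_C1 g) (hφ : CF_C1 φ) (lam : ℝ) :
    ContDiff ℝ 1 (uncurryHam (Ham L g φ lam)) := by
  have hargs : ContDiff ℝ 1 fun z : ℝ × Vec n × Vec m × Vec n × Vec m × Vec n =>
      (z.1, z.2.1, z.2.2.1, z.2.2.2.1, z.2.2.2.2.1) := by
    fun_prop
  exact ((hL.comp hargs).sub (contDiff_const.mul (hg.comp hargs))).add
    (contDiff_snd.snd.snd.snd.snd.inner ℝ (hφ.comp hargs))

theorem hasDerivAt_hamAlong {H : HamT n m} {τ t : ℝ} {q p : ℝ → Vec n} {u : ℝ → Vec m}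
    (hH : DifferentiableAt ℝ (uncurryHam H) (t, q t, u t, q (t - τ), u (t - τ), p t))
    (hq : DifferentiableAt ℝ q t) (hu : DifferentiableAt ℝ u t)
    (hqτ : DifferentiableAt ℝ q (t - τ)) (huτ : DifferentiableAt ℝ u (t - τ))
    (hp : DifferentiableAt ℝ p t) :
    HasDerivAt (hamAlong H τ q u p)
      (dH1 H τ q u p t + ⟪dH2 H τ q u p t, deriv q t⟫ + ⟪dH3 H τ q u p t, deriv u t⟫
        + ⟪dH4 H τ q u p t, deriv q (t - τ)⟫ + ⟪dH5 H τ q u p t, deriv u (t - τ)⟫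
        + ⟪dH6 H τ q u p t, deriv p t⟫) t := by
  set ℓ := fderiv ℝ (uncurryHam H) (t, q t, u t, q (t - τ), u (t - τ), p t)
  have hℓ : HasFDerivAt (uncurryHam H) ℓ _ := hH.hasFDerivAt
  have h1 : dH1 H τ q u p t = ℓ (1, 0) := hℓ.partial_left.hasDerivAt.deriv
  have h2 : ∀ w, ⟪dH2 H τ q u p t, w⟫ = ℓ (0, w, 0) := fun w => by
    rw [dH2, inner_gradient_left]; exact congr($(hℓ.partial_right.partial_left.fderiv) w)
  have h3 : ∀ w, ⟪dH3 H τ q u p t, w⟫ = ℓ (0, 0, w, 0) := fun w => by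
    rw [dH3, inner_gradient_left]
    exact congr($(hℓ.partial_right.partial_right.partial_left.fderiv) w)
  have h4 : ∀ w, ⟪dH4 H τ q u p t, w⟫ = ℓ (0, 0, 0, w, 0) := fun w => by
    rw [dH4, inner_gradient_left]
    exact congr($(hℓ.partial_right.partial_right.partial_right.partial_left.fderiv) w)
  have h5 : ∀ w, ⟪dH5 H τ q u p t, w⟫ = ℓ (0, 0, 0, 0, w, 0) := fun w => by
    rw [dH5, inner_gradient_left]
    exact congr($(hℓ.partial_right.partial_right.partial_right.partial_right.partial_left.fderiv)
      w)
  have h6 : ∀ w, ⟪dH6 H τ q u p t, w⟫ = ℓ (0, 0, 0, 0, 0, w) := fun w => by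
    rw [dH6, inner_gradient_left]
    exact congr($(hℓ.partial_right.partial_right.partial_right.partial_right.partial_right.fderiv)
      w)
  have hγ : HasDerivAt (fun s => (s, q s, u s, q (s - τ), u (s - τ), p s))
      (1, deriv q t, deriv u t, deriv q (t - τ), deriv u (t - τ), deriv p t) t :=
    (hasDerivAt_id t).prodMk <| hq.hasDerivAt.prodMk <| hu.hasDerivAt.prodMk <|
      (hqτ.hasDerivAt.comp_sub_const t τ).prodMk <|
      (huτ.hasDerivAt.comp_sub_const t τ).prodMk hp.hasDerivAt
  refine (hℓ.comp_hasDerivAt t hγ).congr_deriv ?_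
  rw [h1, h2, h3, h4, h5, h6, ← map_add, ← map_add, ← map_add, ← map_add, ← map_add]
  simp

end DelayedHamiltonian

theorem hamiltonian_duBois_Reymond_with_time_delay_general
    {n m : ℕ} (t₁ t₂ τ : ℝ)
    (hτ : 0 < τ)
    (L g : CF n m ℝ) (φ : CF n m (Vec n))
    (hL : CF_C1 L) (hg : CF_C1 g) (hφ : CF_C1 φ) (lam : ℝ)
    (q : ℝ → Vec n) (u : ℝ → Vec m) (p : ℝ → Vec n)
    (hq : ContDiff ℝ 1 q) (hu : ContDiff ℝ 1 u) (hp : ContDiff ℝ 1 p)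
    -- (q, u, p) is an isoperimetric Pontryagin extremal with time delay:
    (hq' : ∀ t ∈ Icc t₁ t₂, deriv q t = dH6 (Ham L g φ lam) τ q u p t)
    (hp₁ : ∀ t ∈ Icc t₁ (t₂ - τ),
      deriv p t = -(dH2 (Ham L g φ lam) τ q u p t)
        - dH4 (Ham L g φ lam) τ q u p (t + τ))
    (hst₁ : ∀ t ∈ Icc t₁ (t₂ - τ),
      dH3 (Ham L g φ lam) τ q u p t + dH5 (Ham L g φ lam) τ q u p (t + τ) = 0)
    (hp₂ : ∀ t ∈ Icc (t₂ - τ) t₂,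
      deriv p t = -(dH2 (Ham L g φ lam) τ q u p t))
    (hst₂ : ∀ t ∈ Icc (t₂ - τ) t₂, dH3 (Ham L g φ lam) τ q u p t = 0)
    -- the extra condition on the delayed terms:
    (hcond : ∀ t ∈ Icc (t₁ - τ) (t₂ - τ),
      ⟪dH4 (Ham L g φ lam) τ q u p (t + τ), deriv q t⟫
        + ⟪dH5 (Ham L g φ lam) τ q u p (t + τ), deriv u t⟫ = 0) :
    ∀ t ∈ Icc t₁ t₂,
      deriv (hamAlong (Ham L g φ lam) τ q u p) t
        = dH1 (Ham L g φ lam) τ q u p t := by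
  intro t ⟨ht₁, ht₂⟩
  have hH := (contDiff_uncurryHam_Ham hL hg hφ lam).differentiable one_ne_zero
  have hqd := hq.differentiable one_ne_zero
  have hud := hu.differentiable one_ne_zero
  rw [(hasDerivAt_hamAlong (hH _) (hqd _) (hud _) (hqd _) (hud _)
    (hp.differentiable one_ne_zero _)).deriv, hq' t ⟨ht₁, ht₂⟩]
  have hdelayed := hcond (t - τ) ⟨by linarith, by linarith⟩
  rw [sub_add_cancel] at hdelayed
  rcases le_total t (t₂ - τ) with hle | hle
  · have hadvanced := hcond t ⟨by linarith, hle⟩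
    rw [hq' t ⟨ht₁, ht₂⟩, real_inner_comm] at hadvanced
    rw [hp₁ t ⟨ht₁, hle⟩, eq_neg_of_add_eq_zero_left (hst₁ t ⟨ht₁, hle⟩)]
    simp only [inner_sub_right, inner_neg_left, inner_neg_right,
      real_inner_comm (dH6 _ _ _ _ _ _)]
    linarith
  · rw [hp₂ t ⟨hle, ht₂⟩, hst₂ t ⟨hle, ht₂⟩]
    simp only [inner_neg_right, inner_zero_left, real_inner_comm (dH6 _ _ _ _ _ _)]
    linarith

/-- DuBois–Reymond condition `dH/dt = ∂H/∂t` for isoperimetric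
Pontryagin extremals with time delay. -/
theorem hamiltonian_duBois_Reymond_with_time_delay
    {n m : ℕ} (hn : 0 < n) (hm : 0 < m) (t₁ t₂ τ : ℝ) (ht : t₁ < t₂)
    (hτ : 0 < τ) (hτ' : τ < t₂ - t₁)
    (L g : CF n m ℝ) (φ : CF n m (Vec n))
    (hL : CF_C1 L) (hg : CF_C1 g) (hφ : CF_C1 φ) (lam : ℝ)
    (q : ℝ → Vec n) (u : ℝ → Vec m) (p : ℝ → Vec n)
    (hq : ContDiff ℝ 1 q) (hu : ContDiff ℝ 1 u) (hp : ContDiff ℝ 1 p)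
    -- (q, u, p) is an isoperimetric Pontryagin extremal with time delay:
    (hq' : ∀ t ∈ Icc t₁ t₂, deriv q t = dH6 (Ham L g φ lam) τ q u p t)
    (hp₁ : ∀ t ∈ Icc t₁ (t₂ - τ),
      deriv p t = -(dH2 (Ham L g φ lam) τ q u p t)
        - dH4 (Ham L g φ lam) τ q u p (t + τ))
    (hst₁ : ∀ t ∈ Icc t₁ (t₂ - τ),
      dH3 (Ham L g φ lam) τ q u p t + dH5 (Ham L g φ lam) τ q u p (t + τ) = 0)
    (hp₂ : ∀ t ∈ Icc (t₂ - τ) t₂,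
      deriv p t = -(dH2 (Ham L g φ lam) τ q u p t))
    (hst₂ : ∀ t ∈ Icc (t₂ - τ) t₂, dH3 (Ham L g φ lam) τ q u p t = 0)
    -- the extra condition on the delayed terms:
    (hcond : ∀ t ∈ Icc (t₁ - τ) (t₂ - τ),
      ⟪dH4 (Ham L g φ lam) τ q u p (t + τ), deriv q t⟫
        + ⟪dH5 (Ham L g φ lam) τ q u p (t + τ), deriv u t⟫ = 0) :
    ∀ t ∈ Icc t₁ t₂,
      deriv (hamAlong (Ham L g φ lam) τ q u p) t
        = dH1 (Ham L g φ lam) τ q u p t :=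
  hamiltonian_duBois_Reymond_with_time_delay_general t₁ t₂ τ hτ L g φ hL hg hφ lam q u p hq hu hp
    hq' hp₁ hst₁ hp₂ hst₂ hcond

end
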